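/- Let D be a finite strongly connected digraph without loop-edges with vertex set V, and let V_k, V_k' ⊆ V be subsets with |V_k| = |V_k'| = k. Then the action of the defect k group G_{k,V_k} on V ∖ V_k is equivalent to the action of G_{k,V_k'} on V ∖ V_k': there exist a bijection φ : V ∖ V_k → V ∖ V_k' and a group isomorphism ψ : G_{k,V_k} → G_{k,V_k'} such that φ(x·g) = φ(x)·ψ(g) for all x ∈ V ∖ V_k and g ∈ G_{k,V_k}. -/

import Mathlib

/-!
Think of `K` as a set of holes. For an edge `x → h` from an occupied vertex to a hole,
`collapse x h` restricts to a bijection `Kᶜ → (insert x (K \ {h}))ᶜ`: the hole slides from `h`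
to `x`. Sliding along a walk exchanges a hole with any occupied vertex, so by strong
connectivity `Kᶜ` can be carried bijectively onto `K'ᶜ` whenever `|K| = |K'|`. Following this
by an element that fixes `K'ᶜ` and pushes the holes of `K'` out one at a time along exit edges
gives `a ∈ S` restricting to a bijection `α : Kᶜ → K'ᶜ` and mapping all of `V` into `K'ᶜ`;
likewise `β : K'ᶜ → Kᶜ`. For a generator `p` of `G_K`, `α p α⁻¹ = (α p β)(α β)⁻¹` is a quotient
of generators of `G_K'`, so conjugation by `α` embeds `G_K` into `G_K'`; by symmetry and
finiteness the embedding is onto.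
-/

variable {V : Type*}

/-- The elementary collapsing `e_{uv}`: sends `u` to `v` and fixes every other vertex. -/
def collapse [DecidableEq V] (u v : V) : Function.End V :=
  fun x => if x = u then v else x

/-- The flow semigroup of a digraph with edge relation `E`. -/
def flowSemigroup [DecidableEq V] (E : V → V → Prop) : Subsemigroup (Function.End V) :=
  Subsemigroup.closure {f | ∃ u v, E u v ∧ f = collapse u v}

/-- The defect group `G_{k,K}` of the digraph `E` with defect set `K`: the group of
permutations of `V ∖ K` generated by restrictions of elements `s` of the flow semigroup
satisfying `(V ∖ K)·s = V ∖ K` and `K·s ⊆ V ∖ K`. -/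
def defectGroup [DecidableEq V] (E : V → V → Prop) (K : Set V) :
    Subgroup (Equiv.Perm {x : V // x ∉ K}) :=
  Subgroup.closure {p | ∃ s ∈ flowSemigroup E,
    (∀ x ∈ K, s x ∉ K) ∧ ∀ (x : V) (h : x ∉ K), s x = ↑(p ⟨x, h⟩)}

open Set Function Relation

theorem Relation.ReflTransGen.exists_rel_of_mem_of_notMem {α : Type*} {r : α → α → Prop}
    {s : Set α} {a b : α} (h : ReflTransGen r a b) (ha : a ∈ s) (hb : b ∉ s) :
    ∃ x ∈ s, ∃ y ∉ s, r x y := by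
  induction h with
  | refl => exact absurd ha hb
  | @tail c d _ hcd ih =>
    by_cases hc : c ∈ s
    · exact ⟨c, hc, d, hb, hcd⟩
    · exact ih hc

theorem Set.nonempty_of_ncard_eq_of_ne {α : Type*} [Finite α] {s t : Set α}
    (h : s.ncard = t.ncard) (hne : s ≠ t) : t.Nonempty := by
  rw [nonempty_iff_ne_empty]
  rintro rfl
  exact hne ((ncard_eq_zero).mp (h.trans (ncard_empty _)))

theorem Equiv.exists_mulEquiv_of_map_permCongrHom {X Y : Type*} (α : X ≃ Y)
    {H : Subgroup (Equiv.Perm X)} {H' : Subgroup (Equiv.Perm Y)}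
    (h : H.map α.permCongrHom.toMonoidHom = H') :
    ∃ ψ : H ≃* H', ∀ (g : H) (x : X), α ((g : Equiv.Perm X) x) = (ψ g : Equiv.Perm Y) (α x) :=
  ⟨(α.permCongrHom.subgroupMap H).trans (MulEquiv.subgroupCongr h), fun g x => by
    change α ((g : Equiv.Perm X) x) = α ((g : Equiv.Perm X) (α.symm (α x)))
    rw [α.symm_apply_apply]⟩

section Flow

variable [DecidableEq V] {E : V → V → Prop}

theorem collapse_apply_self (u v : V) : collapse u v u = v := if_pos rfl

theorem collapse_apply_of_ne {u v x : V} (h : x ≠ u) : collapse u v x = x := if_neg h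

def flowMonoid (E : V → V → Prop) : Submonoid (Function.End V) :=
  Submonoid.closure {f | ∃ u v, E u v ∧ f = collapse u v}

theorem collapse_mem_flowMonoid {u v : V} (h : E u v) : collapse u v ∈ flowMonoid E :=
  Submonoid.subset_closure ⟨u, v, h, rfl⟩

theorem mem_flowSemigroup_of_mem_flowMonoid {a : Function.End V} (ha : a ∈ flowMonoid E)
    (h1 : a ≠ 1) : a ∈ flowSemigroup E := by
  have ha' : a ∈ ({1} ∪ flowSemigroup E : Set (Function.End V)) := by
    rw [flowSemigroup, ← Submonoid.closure_eq_one_union]; exact ha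
  exact ha'.resolve_left h1

def FlowMoves (E : V → V → Prop) (K K' : Set V) : Prop :=
  ∃ a ∈ flowMonoid E, BijOn a Kᶜ K'ᶜ

theorem FlowMoves.refl (K : Set V) : FlowMoves E K K :=
  ⟨1, one_mem _, bijOn_id _⟩

theorem FlowMoves.trans {K₁ K₂ K₃ : Set V} (h₁₂ : FlowMoves E K₁ K₂)
    (h₂₃ : FlowMoves E K₂ K₃) : FlowMoves E K₁ K₃ := by
  obtain ⟨a, ha, hab⟩ := h₁₂
  obtain ⟨b, hb, hbb⟩ := h₂₃
  exact ⟨b * a, mul_mem hb ha, hbb.comp hab⟩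

theorem flowMoves_collapse {K : Set V} {x h : V} (hx : x ∉ K) (hh : h ∈ K) (he : E x h) :
    FlowMoves E K (insert x (K \ {h})) := by
  have hxh : x ≠ h := fun e => hx (e ▸ hh)
  refine ⟨collapse x h, collapse_mem_flowMonoid he, ?_, ?_, ?_⟩
  · intro y hy
    by_cases hyx : y = x
    · subst hyx; simp [collapse_apply_self, hxh.symm]
    · simp_all [collapse_apply_of_ne hyx]
  · intro y hy z hz hyz
    by_cases hyx : y = x <;> by_cases hzx : z = x <;>
      simp_all [collapse_apply_self, collapse_apply_of_ne]
  · intro y hy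
    simp only [mem_compl_iff, mem_insert_iff, mem_sdiff, mem_singleton_iff, not_or, not_and,
      not_not] at hy
    by_cases hyh : y = h
    · exact ⟨x, hx, hyh ▸ collapse_apply_self x h⟩
    · exact ⟨y, fun hyK => hyh (hy.2 hyK), collapse_apply_of_ne hy.1⟩

theorem flowMoves_exchange {K : Set V} {s t : V} (hw : ReflTransGen E s t) (hs : s ∉ K)
    (ht : t ∈ K) : FlowMoves E K (insert s (K \ {t})) := by
  induction hw using ReflTransGen.head_induction_on generalizing K with
  | refl => exact absurd ht hs
  | @head s s₁ he _ ih =>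
    by_cases hs₁ : s₁ ∈ K
    · obtain rfl | hs₁t := eq_or_ne s₁ t
      · exact flowMoves_collapse hs hs₁ he
      have hK₁ : insert s₁ (insert s (K \ {s₁}) \ {t}) = insert s (K \ {t}) := by
        ext; grind
      exact hK₁ ▸ (flowMoves_collapse hs hs₁ he).trans (ih (by grind) (by grind))
    · obtain rfl | hss₁ := eq_or_ne s s₁
      · exact ih hs ht
      have hK₂ : insert s (insert s₁ (K \ {t}) \ {s₁}) = insert s (K \ {t}) := by
        ext; grind
      exact hK₂ ▸ (ih hs₁ ht).trans (flowMoves_collapse (by grind) (mem_insert _ _) he)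

theorem flowMoves_of_ncard_eq [Finite V] (hconn : ∀ u v : V, ReflTransGen E u v)
    {K K' : Set V} (hcard : K.ncard = K'.ncard) : FlowMoves E K K' := by
  induction hn : (K \ K').ncard generalizing K with
  | zero =>
    have hKK' : K ⊆ K' := sdiff_eq_empty.mp ((ncard_eq_zero).mp hn)
    exact eq_of_subset_of_ncard_le hKK' hcard.ge ▸ FlowMoves.refl K
  | succ n ih =>
    obtain ⟨t, htK, htK'⟩ : (K \ K').Nonempty := nonempty_of_ncard_ne_zero (by omega)
    obtain ⟨s, hsK', hsK⟩ : (K' \ K).Nonempty := by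
      rw [nonempty_iff_ne_empty, Ne, sdiff_eq_empty]
      exact fun h => htK' (eq_of_subset_of_ncard_le h hcard.le ▸ htK)
    refine (flowMoves_exchange (hconn s t) hsK htK).trans (ih ?_ ?_)
    · rw [ncard_exchange hsK htK, hcard]
    · have : insert s (K \ {t}) \ K' = (K \ K') \ {t} := by ext; grind
      rw [this, ncard_sdiff_singleton_of_mem (show t ∈ K \ K' from ⟨htK, htK'⟩), hn]; rfl

theorem exists_mem_flowMonoid_eqOn_mapsTo_compl [Finite V]
    (hconn : ∀ u v : V, ReflTransGen E u v) {K : Set V} {s : V} (hs : s ∉ K) :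
    ∃ z ∈ flowMonoid E, EqOn z id Kᶜ ∧ MapsTo z univ Kᶜ := by
  induction hn : K.ncard generalizing K with
  | zero =>
    obtain rfl := (ncard_eq_zero).mp hn
    exact ⟨1, one_mem _, eqOn_refl _ _, fun _ _ => notMem_empty _⟩
  | succ n ih =>
    obtain ⟨h, hh⟩ := nonempty_of_ncard_ne_zero (s := K) (by omega)
    obtain ⟨x, hxK, y, hyK, hxy⟩ := (hconn h s).exists_rel_of_mem_of_notMem hh hs
    obtain ⟨z, hz, hfix, hinto⟩ := ih (K := K \ {x}) (fun h => hs h.1)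
      (by rw [ncard_sdiff_singleton_of_mem hxK, hn]; rfl)
    refine ⟨collapse x y * z, mul_mem (collapse_mem_flowMonoid hxy) hz, fun w hw => ?_,
      fun w _ => ?_⟩
    · have hwx : w ≠ x := fun e => hw (e ▸ hxK)
      change collapse x y (z w) = w
      rw [hfix (fun h => hw h.1), id, collapse_apply_of_ne hwx]
    · change collapse x y (z w) ∉ K
      by_cases hzw : z w = x
      · rwa [hzw, collapse_apply_self]
      · rw [collapse_apply_of_ne hzw]
        exact fun h => hinto (mem_univ w) ⟨h, hzw⟩

def IsDefectRestriction (E : V → V → Prop) (K K' : Set V)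
    (f : {x : V // x ∉ K} → {x : V // x ∉ K'}) : Prop :=
  ∃ s ∈ flowSemigroup E, (∀ x ∈ K, s x ∉ K') ∧ ∀ (x : V) (h : x ∉ K), s x = ↑(f ⟨x, h⟩)

theorem defectGroup_eq_closure (E : V → V → Prop) (K : Set V) :
    defectGroup E K =
      Subgroup.closure {p : Equiv.Perm {x : V // x ∉ K} | IsDefectRestriction E K K p} :=
  rfl

theorem IsDefectRestriction.comp {K₁ K₂ K₃ : Set V} {f : {x : V // x ∉ K₁} → {x : V // x ∉ K₂}}
    {g : {x : V // x ∉ K₂} → {x : V // x ∉ K₃}} (hf : IsDefectRestriction E K₁ K₂ f)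
    (hg : IsDefectRestriction E K₂ K₃ g) : IsDefectRestriction E K₁ K₃ (g ∘ f) := by
  obtain ⟨a, ha, haK, haf⟩ := hf
  obtain ⟨b, hb, -, hbg⟩ := hg
  refine ⟨b * a, mul_mem hb ha, fun x hx => ?_, fun x hx => ?_⟩
  · change b (a x) ∉ K₃
    rw [hbg _ (haK x hx)]
    exact (g _).prop
  · change b (a x) = _
    rw [haf x hx, hbg _ (f _).prop]
    rfl

theorem exists_equiv_isDefectRestriction [Finite V] (hconn : ∀ u v : V, ReflTransGen E u v)
    {K K' : Set V} (hcard : K.ncard = K'.ncard) (hK' : K'.Nonempty) (hK'c : K'ᶜ.Nonempty) :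
    ∃ α : {x : V // x ∉ K} ≃ {x : V // x ∉ K'}, IsDefectRestriction E K K' α := by
  obtain ⟨a, ha, hab⟩ := flowMoves_of_ncard_eq hconn hcard
  obtain ⟨s, hs⟩ := hK'c
  obtain ⟨z, hz, hfix, hinto⟩ := exists_mem_flowMonoid_eqOn_mapsTo_compl hconn hs
  have hzab : BijOn (z * a) Kᶜ K'ᶜ := hab.congr fun x hx => (hfix (hab.mapsTo hx)).symm
  have hza1 : z * a ≠ 1 := fun h =>
    hinto (mem_univ (a hK'.some)) (show (z * a) hK'.some ∈ K' from h ▸ hK'.some_mem)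
  exact ⟨hzab.equiv _, z * a, mem_flowSemigroup_of_mem_flowMonoid (mul_mem hz ha) hza1,
    fun _ _ => hinto (mem_univ _), fun _ _ => rfl⟩

theorem map_permCongrHom_defectGroup_le {K K' : Set V} {α : {x : V // x ∉ K} ≃ {x : V // x ∉ K'}}
    {β : {x : V // x ∉ K'} ≃ {x : V // x ∉ K}} (hα : IsDefectRestriction E K K' α)
    (hβ : IsDefectRestriction E K' K β) :
    (defectGroup E K).map α.permCongrHom.toMonoidHom ≤ defectGroup E K' := by
  rw [defectGroup_eq_closure, MonoidHom.map_closure, Subgroup.closure_le]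
  rintro _ ⟨p, hp : IsDefectRestriction E K K p, rfl⟩
  have hmem {q : Equiv.Perm {x : V // x ∉ K'}} (hq : IsDefectRestriction E K' K' q) :
      q ∈ defectGroup E K' :=
    defectGroup_eq_closure E K' ▸ Subgroup.subset_closure hq
  have hconj : α.permCongrHom p = β.trans (p.trans α) * (β.trans α)⁻¹ := by
    ext y; simp [Equiv.permCongrHom, Equiv.Perm.mul_apply, Equiv.Perm.inv_def]
  rw [MulEquiv.coe_toMonoidHom, hconj]
  exact mul_mem (hmem (hβ.comp (hp.comp hα))) (inv_mem (hmem (hβ.comp hα)))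

theorem map_permCongrHom_defectGroup [Finite V] {K K' : Set V}
    {α : {x : V // x ∉ K} ≃ {x : V // x ∉ K'}} {β : {x : V // x ∉ K'} ≃ {x : V // x ∉ K}}
    (hα : IsDefectRestriction E K K' α) (hβ : IsDefectRestriction E K' K β) :
    (defectGroup E K).map α.permCongrHom.toMonoidHom = defectGroup E K' := by
  refine Subgroup.eq_of_le_of_card_ge (map_permCongrHom_defectGroup_le hα hβ) ?_
  calc Nat.card (defectGroup E K')
      = Nat.card ((defectGroup E K').map β.permCongrHom.toMonoidHom) :=
        (Subgroup.card_map_of_injective β.permCongrHom.injective).symm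
    _ ≤ Nat.card (defectGroup E K) :=
        Subgroup.card_le_of_le (map_permCongrHom_defectGroup_le hβ hα)
    _ = _ := (Subgroup.card_map_of_injective α.permCongrHom.injective).symm

end Flow

theorem stmt1_general [Fintype V] [DecidableEq V] (E : V → V → Prop)
    (hstronglyconnected : ∀ u v : V, Relation.ReflTransGen E u v)
    (k : ℕ) (K K' : Set V) (hK : K.ncard = k) (hK' : K'.ncard = k) :
    ∃ (φ : {x : V // x ∉ K} ≃ {x : V // x ∉ K'})
      (ψ : defectGroup E K ≃* defectGroup E K'),
      ∀ (g : defectGroup E K) (x : {x : V // x ∉ K}),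
        φ ((g : Equiv.Perm {x : V // x ∉ K}) x)
          = (ψ g : Equiv.Perm {x : V // x ∉ K'}) (φ x) := by
  obtain rfl | hne := eq_or_ne K K'
  · exact ⟨Equiv.refl _, MulEquiv.refl _, fun _ _ => rfl⟩
  have hcard : K.ncard = K'.ncard := hK.trans hK'.symm
  have hcardc : Kᶜ.ncard = K'ᶜ.ncard := by rw [ncard_compl, ncard_compl, hcard]
  obtain ⟨α, hα⟩ := exists_equiv_isDefectRestriction hstronglyconnected hcard
    (nonempty_of_ncard_eq_of_ne hcard hne)
    (nonempty_of_ncard_eq_of_ne hcardc (compl_injective.ne hne))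
  obtain ⟨β, hβ⟩ := exists_equiv_isDefectRestriction hstronglyconnected hcard.symm
    (nonempty_of_ncard_eq_of_ne hcard.symm hne.symm)
    (nonempty_of_ncard_eq_of_ne hcardc.symm (compl_injective.ne hne.symm))
  obtain ⟨ψ, hψ⟩ := α.exists_mulEquiv_of_map_permCongrHom (map_permCongrHom_defectGroup hα hβ)
  exact ⟨α, ψ, hψ⟩

theorem stmt1 [Fintype V] [DecidableEq V] (E : V → V → Prop)
    (hloopless : ∀ v : V, ¬ E v v)
    (hstronglyconnected : ∀ u v : V, Relation.ReflTransGen E u v)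
    (k : ℕ) (K K' : Set V) (hK : K.ncard = k) (hK' : K'.ncard = k) :
    ∃ (φ : {x : V // x ∉ K} ≃ {x : V // x ∉ K'})
      (ψ : defectGroup E K ≃* defectGroup E K'),
      ∀ (g : defectGroup E K) (x : {x : V // x ∉ K}),
        φ ((g : Equiv.Perm {x : V // x ∉ K}) x)
          = (ψ g : Equiv.Perm {x : V // x ∉ K'}) (φ x) :=
  stmt1_general E hstronglyconnected k K K' hK hK'
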